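/- arXiv:1810.06131 — 4 statements merged into one kernel-verified Lean document; each statement's English description precedes it below -/
import Mathlib

section
/- Let R be a commutative ring, let n ≥ 1, let a ∈ R and let t_1, …, t_n ∈ R. Then the antisymmetrized product satisfies: ∑_{σ ∈ S_n} sgn(σ) ∏_{1 ≤ i < j ≤ n} (a + t_{σ(i)} − t_{σ(j)}) = n! · ∏_{1 ≤ i < j ≤ n} (t_i − t_j). In particular the left-hand side does not depend on a. -/
open Finset

open MvPolynomial

section AntisymHelpers

theorem prod_pairs_eq {M : Type*} [CommMonoid M] (n : ℕ) (f : Fin n × Fin n → M) :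
    ∏ p ∈ Finset.univ.filter (fun p : Fin n × Fin n => p.1 < p.2), f p
      = ∏ i : Fin n, ∏ j ∈ Ioi i, f (i, j) := by
  have := Finset.prod_finset_product' (Finset.univ.filter fun p : Fin n × Fin n => p.1 < p.2)
    Finset.univ (fun i => Ioi i) (f := fun i j => f (i, j)) (fun p => by simp [mem_Ioi])
  simpa using this

theorem sum_range_le_finset : ∀ (k : ℕ) (s : Finset ℕ), #s = k → ∑ j ∈ range k, j ≤ ∑ x ∈ s, x := by
  intro k
  induction k with
  | zero => simp
  | succ k ih =>
    intro s hn
    have hne : s.Nonempty := by rw [← Finset.card_pos, hn]; omega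
    have hM : k ≤ s.max' hne := by
      by_contra h
      have hsub : s ⊆ range (s.max' hne + 1) := fun x hx => by
        simp only [mem_range]; exact Nat.lt_succ_of_le (Finset.le_max' s x hx)
      have := Finset.card_le_card hsub
      simp [hn] at this; omega
    have hcard : #(s.erase (s.max' hne)) = k := by
      rw [Finset.card_erase_of_mem (s.max'_mem hne), hn]
      omega
    calc ∑ j ∈ range (k+1), j = (∑ j ∈ range k, j) + k := by rw [Finset.sum_range_succ]
    _ ≤ (∑ x ∈ s.erase (s.max' hne), x) + s.max' hne :=
        Nat.add_le_add (ih _ hcard) hM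
    _ = ∑ x ∈ s, x := Finset.sum_erase_add s _ (s.max'_mem hne)

theorem sum_injective_ge {n : ℕ} (f : Fin n → ℕ) (hf : Function.Injective f) :
    ∑ j ∈ range n, j ≤ ∑ i, f i := by
  have h1 : #(Finset.image f univ) = n := by
    rw [Finset.card_image_of_injective _ hf, card_univ, Fintype.card_fin]
  calc ∑ j ∈ range n, j = ∑ j ∈ range #(Finset.image f univ), j := by rw [h1]
  _ ≤ ∑ x ∈ Finset.image f univ, x := sum_range_le_finset _ _ rfl
  _ = ∑ i, f i := Finset.sum_image (fun a _ b _ h => hf h)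

theorem sum_pairs_eq {M : Type*} [AddCommMonoid M] (n : ℕ) (f : Fin n × Fin n → M) :
    ∑ p ∈ Finset.univ.filter (fun p : Fin n × Fin n => p.1 < p.2), f p
      = ∑ i : Fin n, ∑ j ∈ Ioi i, f (i, j) := by
  have := Finset.sum_finset_product' (Finset.univ.filter fun p : Fin n × Fin n => p.1 < p.2)
    Finset.univ (fun i => Ioi i) (f := fun i j => f (i, j)) (fun p => by simp [mem_Ioi])
  simpa using this

theorem card_pairs (n : ℕ) :
    #(Finset.univ.filter (fun p : Fin n × Fin n => p.1 < p.2)) = ∑ j ∈ range n, j := by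
  rw [Finset.card_eq_sum_ones, sum_pairs_eq]
  have : ∀ i : Fin n, ∑ _j ∈ Ioi i, 1 = n - 1 - (i : ℕ) := fun i => by
    rw [Finset.sum_const, smul_eq_mul, mul_one, Fin.card_Ioi]
  rw [Finset.sum_congr rfl (fun i _ => this i), Fin.sum_univ_eq_sum_range]
  rw [← Finset.sum_range_reflect]
  exact Finset.sum_congr rfl (fun j hj => by rw [mem_range] at hj; omega)


theorem prod_pairs_vdm {R : Type*} [CommRing R] {n : ℕ} (x : Fin n → R) :
    ∏ p ∈ Finset.univ.filter (fun p : Fin n × Fin n => p.1 < p.2), (x p.1 - x p.2)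
      = (-1) ^ #(Finset.univ.filter (fun p : Fin n × Fin n => p.1 < p.2)) *
          (Matrix.vandermonde x).det := by
  rw [Matrix.det_vandermonde, ← prod_pairs_eq n (fun p => x p.2 - x p.1), ← Finset.prod_const,
    ← Finset.prod_mul_distrib]
  exact Finset.prod_congr rfl (fun p _ => by ring)

theorem prod_pairs_perm {R : Type*} [CommRing R] {n : ℕ} (x : Fin n → R)
    (σ : Equiv.Perm (Fin n)) :
    ∏ p ∈ Finset.univ.filter (fun p : Fin n × Fin n => p.1 < p.2), (x (σ p.1) - x (σ p.2))
      = ((Equiv.Perm.sign σ : ℤ) : R) *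
        ∏ p ∈ Finset.univ.filter (fun p : Fin n × Fin n => p.1 < p.2), (x p.1 - x p.2) := by
  have h1 : Matrix.vandermonde (x ∘ σ) = (Matrix.vandermonde x).submatrix σ id := by
    ext i j; simp [Matrix.vandermonde]
  have := prod_pairs_vdm (x ∘ σ)
  simp only [Function.comp] at this
  rw [this, h1, Matrix.det_permute, prod_pairs_vdm x]
  push_cast
  ring

variable {n : ℕ}

noncomputable def Pbig (n : ℕ) : Polynomial (MvPolynomial (Fin n) ℤ) :=
  ∑ σ : Equiv.Perm (Fin n),
    Polynomial.C (MvPolynomial.C ((Equiv.Perm.sign σ : ℤ))) *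
      ∏ p ∈ Finset.univ.filter (fun p : Fin n × Fin n => p.1 < p.2),
        (Polynomial.X + Polynomial.C (X (σ p.1) - X (σ p.2)))

theorem map_swap_Pbig {i j : Fin n} (hij : i ≠ j) :
    Polynomial.map (rename (Equiv.swap i j)).toRingHom (Pbig n) = -(Pbig n) := by
  unfold Pbig
  rw [Polynomial.map_sum, ← Finset.sum_neg_distrib]
  refine Fintype.sum_equiv (Equiv.mulLeft (Equiv.swap i j)) _ _ (fun σ => ?_)
  rw [Polynomial.map_mul, Polynomial.map_prod]
  simp only [Polynomial.map_C, Polynomial.map_add, Polynomial.map_X, map_sub, rename_C,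
    RingHom.coe_coe, AlgHom.toRingHom_eq_coe, rename_X]
  have hsgn : (Equiv.Perm.sign (Equiv.mulLeft (Equiv.swap i j) σ) : ℤ) =
      -(Equiv.Perm.sign σ : ℤ) := by
    simp [Equiv.Perm.sign_mul, Equiv.Perm.sign_swap hij]
  rw [hsgn]
  simp only [Polynomial.map_sub, Polynomial.map_C, rename_X, map_neg, neg_mul, neg_neg,
    Equiv.coe_mulLeft, Equiv.Perm.coe_mul, Function.comp_apply, map_intCast, Equiv.Perm.mul_apply,
    RingHom.coe_coe, AlgHom.toRingHom_eq_coe]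
  ring

theorem swap_coeff {i j : Fin n} (hij : i ≠ j) (k : ℕ) :
    rename (Equiv.swap i j) ((Pbig n).coeff k) = -((Pbig n).coeff k) := by
  have := congrArg (fun q => Polynomial.coeff q k) (map_swap_Pbig hij)
  simpa [Polynomial.coeff_map] using this

theorem coeff_Pbig_coeff_zero {k : ℕ} {m : Fin n →₀ ℕ} {i j : Fin n} (hij : i ≠ j)
    (hm : m i = m j) : MvPolynomial.coeff m ((Pbig n).coeff k) = 0 := by
  have h := coeff_rename_mapDomain (Equiv.swap i j) (Equiv.injective _) ((Pbig n).coeff k) m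
  have hmap : Finsupp.mapDomain (Equiv.swap i j) m = m := by
    ext x
    rw [Finsupp.mapDomain_equiv_apply, Equiv.symm_swap]
    rcases eq_or_ne x i with rfl | hxi
    · rw [Equiv.swap_apply_left, hm]
    rcases eq_or_ne x j with rfl | hxj
    · rw [Equiv.swap_apply_right, hm]
    · rw [Equiv.swap_apply_of_ne_of_ne hxi hxj]
  rw [swap_coeff hij, hmap, MvPolynomial.coeff_neg] at h
  omega

theorem natDegree_Pbig : (Pbig n).natDegree
    ≤ #(Finset.univ.filter (fun p : Fin n × Fin n => p.1 < p.2)) := by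
  refine Polynomial.natDegree_sum_le_of_forall_le _ _ (fun σ _ => ?_)
  refine (Polynomial.natDegree_C_mul_le _ _).trans ?_
  refine (Polynomial.natDegree_prod_le _ _).trans ?_
  rw [Finset.card_eq_sum_ones]
  exact Finset.sum_le_sum fun p _ => (Polynomial.natDegree_X_add_C _).le

theorem totalDegree_coeff_Pbig {k : ℕ}
    (hk : k ≤ #(Finset.univ.filter (fun p : Fin n × Fin n => p.1 < p.2))) :
    ((Pbig n).coeff k).totalDegree
      ≤ #(Finset.univ.filter (fun p : Fin n × Fin n => p.1 < p.2)) - k := by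
  set N := #(Finset.univ.filter (fun p : Fin n × Fin n => p.1 < p.2)) with hN
  unfold Pbig
  rw [Polynomial.finset_sum_coeff]
  refine totalDegree_finsetSum_le (fun σ _ => ?_)
  rw [Polynomial.coeff_C_mul, Finset.prod_X_add_C_coeff _ _ hk]
  refine (totalDegree_mul _ _).trans ?_
  rw [totalDegree_C, zero_add]
  refine totalDegree_finsetSum_le (fun t ht => ?_)
  refine (totalDegree_finset_prod _ _).trans ?_
  rw [Finset.mem_powersetCard] at ht
  calc ∑ p ∈ t, ((X (σ p.1) - X (σ p.2) : MvPolynomial (Fin n) ℤ)).totalDegree ≤ ∑ _p ∈ t, 1 :=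
    Finset.sum_le_sum fun p _ => (totalDegree_sub _ _).trans (by simp [totalDegree_X])
  _ = N - k := by rw [Finset.sum_const, smul_eq_mul, mul_one, ht.2]

theorem coeff_Pbig_eq_zero {k : ℕ} (hk : 1 ≤ k) : (Pbig n).coeff k = 0 := by
  set N := #(Finset.univ.filter (fun p : Fin n × Fin n => p.1 < p.2)) with hN
  rcases le_or_gt k N with hkN | hkN
  · by_contra h
    obtain ⟨m, hm⟩ := MvPolynomial.ne_zero_iff.mp h
    have hinj : Function.Injective (fun i => m i) := by
      intro i j hij
      by_contra hne
      exact hm (coeff_Pbig_coeff_zero hne hij)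
    have hge : ∑ j ∈ Finset.range n, j ≤ ∑ i, m i := sum_injective_ge _ hinj
    have hle : (∑ i, m i) ≤ N - k := by
      have h1 := le_totalDegree (p := (Pbig n).coeff k) (mem_support_iff.mpr hm)
      have h2 : m.sum (fun _ e => e) = ∑ i, m i := Finsupp.sum_fintype _ _ (fun _ => rfl)
      exact (h2 ▸ h1).trans (totalDegree_coeff_Pbig hkN)
    rw [← card_pairs n, ← hN] at hge
    omega
  · exact Polynomial.coeff_eq_zero_of_natDegree_lt (lt_of_le_of_lt natDegree_Pbig hkN)

theorem Pbig_eq_C : Pbig n = Polynomial.C ((Pbig n).coeff 0) := by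
  ext k
  rcases Nat.eq_zero_or_pos k with rfl | hk
  · simp
  · rw [coeff_Pbig_eq_zero hk, Polynomial.coeff_C, if_neg (by omega)]

theorem eval_map_Pbig {R : Type*} [CommRing R] (a : R) (t : Fin n → R) :
    Polynomial.eval a (Polynomial.map (MvPolynomial.aeval t).toRingHom (Pbig n)) =
      ∑ σ : Equiv.Perm (Fin n),
        ((Equiv.Perm.sign σ : ℤ) : R) *
          ∏ p ∈ Finset.univ.filter (fun p : Fin n × Fin n => p.1 < p.2),
            (a + (t (σ p.1) - t (σ p.2))) := by
  unfold Pbig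
  rw [Polynomial.map_sum, Polynomial.eval_finset_sum]
  refine Finset.sum_congr rfl (fun σ _ => ?_)
  rw [Polynomial.map_mul, Polynomial.eval_mul, Polynomial.map_prod, Polynomial.eval_prod]
  simp [Polynomial.eval_prod]

end AntisymHelpers

/-- Identity (B.8)/(B.9): the antisymmetrized product
`∑_{σ ∈ S_n} sgn(σ) ∏_{i<j} (a + t_{σ(i)} − t_{σ(j)}) = n! ∏_{i<j} (t_i − t_j)`
in any commutative ring; in particular it does not depend on `a`. -/
theorem antisymmetrized_product_eq {R : Type*} [CommRing R] (n : ℕ) (hn : 1 ≤ n)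
    (a : R) (t : Fin n → R) :
    ∑ σ : Equiv.Perm (Fin n),
      ((Equiv.Perm.sign σ : ℤ) : R) *
        ∏ p ∈ Finset.univ.filter (fun p : Fin n × Fin n => p.1 < p.2),
          (a + t (σ p.1) - t (σ p.2))
    = (n.factorial : R) *
        ∏ p ∈ Finset.univ.filter (fun p : Fin n × Fin n => p.1 < p.2),
          (t p.1 - t p.2) := by
  have h0 := eval_map_Pbig (n := n) a t
  have hc := eval_map_Pbig (n := n) (0 : R) t
  rw [Pbig_eq_C, Polynomial.map_C, Polynomial.eval_C] at h0 hc
  simp only [add_sub_assoc]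
  rw [← h0, hc]
  simp only [zero_add]
  have key : ∀ σ : Equiv.Perm (Fin n),
      ((Equiv.Perm.sign σ : ℤ) : R) *
        ∏ p ∈ Finset.univ.filter (fun p : Fin n × Fin n => p.1 < p.2), (t (σ p.1) - t (σ p.2))
      = ∏ p ∈ Finset.univ.filter (fun p : Fin n × Fin n => p.1 < p.2), (t p.1 - t p.2) := by
    intro σ
    rw [prod_pairs_perm t σ, ← mul_assoc, ← Int.cast_mul, ← Units.val_mul,
      Int.units_mul_self, Units.val_one, Int.cast_one, one_mul]
  rw [Finset.sum_congr rfl (fun σ _ => key σ), Finset.sum_const, card_univ,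
    Fintype.card_perm, Fintype.card_fin, nsmul_eq_mul]
end

section
/- Let R be a commutative ring, let n ≥ 1 and let ξ_1, …, ξ_n ∈ R. Then ∑_{σ ∈ S_n} sgn(σ) ∏_{1 ≤ i < j ≤ n} (ξ_{σ(i)} ξ_{σ(j)} + 1 − 2 ξ_{σ(i)}) = n! · ∏_{1 ≤ i < j ≤ n} (ξ_j − ξ_i). -/
/-!
With `a_i = ξ_i - 1` each factor is `a_i a_j + (a_j - a_i)`. Expanding the product over the pairs
`i < j` by the set `S` of pairs contributing `a_i a_j`, the term `S = ∅` is the Vandermonde product,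
whose antisymmetrization is `n!` times itself. For `S ≠ ∅`, every monomial has total degree
`n(n-1)/2 + #S` while no variable occurs to a power above `n - 1`, so two variables carry the same
exponent and the antisymmetrization of the monomial, a determinant with two equal columns, vanishes.
-/

open Finset Equiv

def ltPairs (n : ℕ) : Finset (Fin n × Fin n) :=
  univ.filter fun p => p.1 < p.2

section

variable {R : Type*} [CommRing R] {n : ℕ}

theorem prod_comp_eq_prod_pow_card_filter {ι κ M : Type*} [Fintype κ] [DecidableEq κ]
    [CommMonoid M] (s : Finset ι) (f : κ → M) (g : ι → κ) :
    ∏ a ∈ s, f (g a) = ∏ b, f b ^ #{a ∈ s | g a = b} := by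
  rw [← prod_fiberwise s g]
  refine prod_congr rfl fun b _ => ?_
  rw [prod_congr rfl fun a ha => by rw [(mem_filter.1 ha).2], prod_const]

theorem sum_eq_sum_val_of_injective {α : Fin n → ℕ} (hlt : ∀ k, α k < n) (hα : α.Injective) :
    ∑ k, α k = ∑ k : Fin n, (k : ℕ) := by
  have hbij : (fun k => (⟨α k, hlt k⟩ : Fin n)).Bijective :=
    Finite.injective_iff_bijective.1 fun a b h => hα (congrArg Fin.val h)
  exact Fintype.sum_bijective _ hbij _ _ fun _ => rfl

theorem sum_sign_mul_prod_pow_eq_zero {ι : Type*} [Fintype ι] [DecidableEq ι] (A : ι → R)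
    {α : ι → ℕ} (hα : ¬α.Injective) :
    ∑ σ : Perm ι, ((Perm.sign σ : ℤ) : R) * ∏ k, A (σ k) ^ α k = 0 := by
  obtain ⟨i, j, hij, hne⟩ := Function.not_injective_iff.1 hα
  rw [← Matrix.det_zero_of_column_eq (M := Matrix.of fun a k => A a ^ α k) hne
    (fun a => by simp [hij]), Matrix.det_apply']
  rfl

theorem card_filter_ltPairs_fst (k : Fin n) : #{p ∈ ltPairs n | p.1 = k} = n - 1 - k := by
  rw [← Fin.card_Ioi k, ← card_image_of_injective (Ioi k) (Prod.mk_right_injective k)]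
  refine congrArg card ?_
  ext ⟨a, b⟩
  simp only [ltPairs, mem_filter, mem_univ, true_and, mem_image, mem_Ioi, Prod.mk.injEq]
  grind

theorem card_filter_ltPairs_snd (k : Fin n) : #{p ∈ ltPairs n | p.2 = k} = k := by
  rw [← Fin.card_Iio k, ← card_image_of_injective (Iio k) (Prod.mk_left_injective k)]
  refine congrArg card ?_
  ext ⟨a, b⟩
  simp only [ltPairs, mem_filter, mem_univ, true_and, mem_image, mem_Iio, Prod.mk.injEq]
  grind

theorem card_ltPairs : #(ltPairs n) = ∑ k : Fin n, (k : ℕ) := by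
  rw [card_eq_sum_card_fiberwise (f := Prod.snd) (t := univ) fun p _ => mem_univ p.2]
  exact sum_congr rfl fun k _ => card_filter_ltPairs_snd k

theorem sum_sign_mul_prod_fst_mul_prod_snd_eq_zero (A : Fin n → R)
    {X Y : Finset (Fin n × Fin n)} (hX : X ⊆ ltPairs n) (hY : Y ⊆ ltPairs n)
    (hXY : #X + #Y ≠ #(ltPairs n)) :
    ∑ σ : Perm (Fin n),
      ((Perm.sign σ : ℤ) : R) * ((∏ p ∈ X, A (σ p.1)) * ∏ p ∈ Y, A (σ p.2)) = 0 := by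
  set α : Fin n → ℕ := fun k => #{p ∈ X | p.1 = k} + #{p ∈ Y | p.2 = k}
  have hmonomial : ∀ σ : Perm (Fin n),
      (∏ p ∈ X, A (σ p.1)) * ∏ p ∈ Y, A (σ p.2) = ∏ k, A (σ k) ^ α k := by
    intro σ
    simp only [prod_comp_eq_prod_pow_card_filter _ (fun k => A (σ k)), α, pow_add,
      prod_mul_distrib]
  have hlt : ∀ k, α k < n := by
    intro k
    have hfst := card_le_card (filter_subset_filter (fun p => p.1 = k) hX)
    have hsnd := card_le_card (filter_subset_filter (fun p => p.2 = k) hY)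
    rw [card_filter_ltPairs_fst] at hfst
    rw [card_filter_ltPairs_snd] at hsnd
    have := k.isLt
    simp only [α]
    omega
  have hsum : ∑ k, α k = #X + #Y := by
    simp only [α, sum_add_distrib, ← card_eq_sum_card_fiberwise fun p _ => mem_univ _]
  simp_rw [hmonomial]
  refine sum_sign_mul_prod_pow_eq_zero A fun hinj => hXY ?_
  rw [← hsum, card_ltPairs, sum_eq_sum_val_of_injective hlt hinj]

theorem prod_ltPairs_sub_eq_det_vandermonde (v : Fin n → R) :
    ∏ p ∈ ltPairs n, (v p.2 - v p.1) = (Matrix.vandermonde v).det := by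
  rw [Matrix.det_vandermonde, ltPairs, prod_filter, Fintype.prod_prod_type]
  refine prod_congr rfl fun i _ => ?_
  rw [← prod_filter, filter_lt_eq_Ioi]

theorem sum_sign_mul_prod_ltPairs_sub (A : Fin n → R) :
    ∑ σ : Perm (Fin n), ((Perm.sign σ : ℤ) : R) * ∏ p ∈ ltPairs n, (A (σ p.2) - A (σ p.1))
      = n.factorial * ∏ p ∈ ltPairs n, (A p.2 - A p.1) := by
  have hperm : ∀ σ : Perm (Fin n), ∏ p ∈ ltPairs n, (A (σ p.2) - A (σ p.1))
      = ((Perm.sign σ : ℤ) : R) * ∏ p ∈ ltPairs n, (A p.2 - A p.1) := by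
    intro σ
    refine (prod_ltPairs_sub_eq_det_vandermonde (A ∘ σ)).trans ?_
    rw [prod_ltPairs_sub_eq_det_vandermonde]
    exact Matrix.det_permute σ (Matrix.vandermonde A)
  simp_rw [hperm, ← mul_assoc, ← Int.cast_mul, ← Units.val_mul, Int.units_mul_self]
  simp [Fintype.card_perm]

theorem sum_sign_mul_prod_mul_prod_sub_eq_zero (A : Fin n → R) {S : Finset (Fin n × Fin n)}
    (hS : S ⊆ ltPairs n) (hne : S.Nonempty) :
    ∑ σ : Perm (Fin n), ((Perm.sign σ : ℤ) : R) *
      ((∏ p ∈ S, A (σ p.1) * A (σ p.2)) * ∏ p ∈ ltPairs n \ S, (A (σ p.2) - A (σ p.1))) = 0 := by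
  set D := ltPairs n \ S
  have hexpand : ∀ σ : Perm (Fin n),
      (∏ p ∈ S, A (σ p.1) * A (σ p.2)) * ∏ p ∈ D, (A (σ p.2) - A (σ p.1))
        = ∑ t ∈ D.powerset,
            (-1) ^ #t * ((∏ p ∈ S ∪ t, A (σ p.1)) * ∏ p ∈ S ∪ (D \ t), A (σ p.2)) := by
    intro σ
    rw [prod_sub, mul_sum]
    refine sum_congr rfl fun t ht => ?_
    have hSD : Disjoint S D := disjoint_sdiff
    rw [prod_union (hSD.mono_right (mem_powerset.1 ht)), prod_union (hSD.mono_right sdiff_subset),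
      prod_mul_distrib]
    ring
  simp_rw [hexpand, mul_sum]
  rw [sum_comm]
  refine sum_eq_zero fun t ht => ?_
  have htD : t ⊆ D := mem_powerset.1 ht
  simp_rw [mul_left_comm _ ((-1 : R) ^ #t), ← mul_sum]
  rw [sum_sign_mul_prod_fst_mul_prod_snd_eq_zero A (union_subset hS (htD.trans sdiff_subset))
    (union_subset hS (sdiff_subset.trans sdiff_subset)), mul_zero]
  have hSD : Disjoint S D := disjoint_sdiff
  rw [card_union_of_disjoint (hSD.mono_right htD),
    card_union_of_disjoint (hSD.mono_right sdiff_subset), card_sdiff_of_subset htD,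
    card_sdiff_of_subset hS]
  have := card_le_card hS
  have := card_le_card htD
  have := hne.card_pos
  omega

end

theorem antisymmetrized_kernel_product_eq_general {R : Type*} [CommRing R] (n : ℕ)
    (ξ : Fin n → R) :
    ∑ σ : Equiv.Perm (Fin n),
      ((Equiv.Perm.sign σ : ℤ) : R) *
        ∏ p ∈ Finset.univ.filter (fun p : Fin n × Fin n => p.1 < p.2),
          (ξ (σ p.1) * ξ (σ p.2) + 1 - 2 * ξ (σ p.1))
    = (n.factorial : R) *
        ∏ p ∈ Finset.univ.filter (fun p : Fin n × Fin n => p.1 < p.2),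
          (ξ p.2 - ξ p.1) := by
  set A : Fin n → R := fun i => ξ i - 1 with hA
  have hexpand : ∀ σ : Perm (Fin n),
      ∏ p ∈ ltPairs n, (ξ (σ p.1) * ξ (σ p.2) + 1 - 2 * ξ (σ p.1))
        = ∑ S ∈ (ltPairs n).powerset,
            (∏ p ∈ S, A (σ p.1) * A (σ p.2)) * ∏ p ∈ ltPairs n \ S, (A (σ p.2) - A (σ p.1)) := by
    intro σ
    rw [← prod_add]
    exact prod_congr rfl fun p _ => by rw [hA]; ring
  calc _ = ∑ S ∈ (ltPairs n).powerset, ∑ σ : Perm (Fin n), ((Perm.sign σ : ℤ) : R) *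
        ((∏ p ∈ S, A (σ p.1) * A (σ p.2)) * ∏ p ∈ ltPairs n \ S, (A (σ p.2) - A (σ p.1))) := by
        simp_rw [← ltPairs.eq_def, hexpand, mul_sum]
        exact sum_comm
    _ = ∑ σ : Perm (Fin n), ((Perm.sign σ : ℤ) : R) *
          ∏ p ∈ ltPairs n, (A (σ p.2) - A (σ p.1)) := by
        rw [sum_eq_single_of_mem ∅ (empty_mem_powerset _) fun S hS hne =>
          sum_sign_mul_prod_mul_prod_sub_eq_zero A (mem_powerset.1 hS) (nonempty_iff_ne_empty.2 hne)]
        simp only [prod_empty, one_mul, sdiff_empty]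
    _ = _ := by
        rw [sum_sign_mul_prod_ltPairs_sub, hA]
        simp only [sub_sub_sub_cancel_right, ltPairs]

/-- Identity (B.4): for a commutative ring `R`, `n ≥ 1` and `ξ_1, …, ξ_n ∈ R`,
`∑_{σ ∈ S_n} sgn(σ) ∏_{i<j} (ξ_{σ(i)} ξ_{σ(j)} + 1 − 2 ξ_{σ(i)}) = n! ∏_{i<j} (ξ_j − ξ_i)`. -/
theorem antisymmetrized_kernel_product_eq {R : Type*} [CommRing R] (n : ℕ) (hn : 1 ≤ n)
    (ξ : Fin n → R) :
    ∑ σ : Equiv.Perm (Fin n),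
      ((Equiv.Perm.sign σ : ℤ) : R) *
        ∏ p ∈ Finset.univ.filter (fun p : Fin n × Fin n => p.1 < p.2),
          (ξ (σ p.1) * ξ (σ p.2) + 1 - 2 * ξ (σ p.1))
    = (n.factorial : R) *
        ∏ p ∈ Finset.univ.filter (fun p : Fin n × Fin n => p.1 < p.2),
          (ξ p.2 - ξ p.1) :=
  antisymmetrized_kernel_product_eq_general n ξ
end

section
/- Let F be a field, let n ≥ 1 and let ξ_1, …, ξ_n ∈ F be such that ξ_i ξ_j + 1 − 2 ξ_i ≠ 0 for all 1 ≤ i, j ≤ n (in particular ξ_k ≠ 1 for every k, since ξ_k² + 1 − 2ξ_k = (1 − ξ_k)²). Then the n × n determinant satisfies det( 1/(ξ_i ξ_j + 1 − 2 ξ_i) )_{i,j=1,…,n} = ∏_{k=1}^n 1/(1 − ξ_k)² · ∏_{1 ≤ i ≠ j ≤ n} (ξ_i − ξ_j)/(ξ_i ξ_j + 1 − 2 ξ_j). -/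
/-!
Put `u k = (1 - ξ k)⁻¹`. Then `ξ i * ξ j + 1 - 2 * ξ j = (1 - ξ i) * (1 - ξ j) * (1 + u i - u j)`,
so the transposed matrix is `diag(u) * C * diag(u)` for the Cauchy matrix `C i j = 1 / (a i + b j)`
with `a i = 1 + u i`, `b j = -u j`. Cauchy's determinant formula, proved by eliminating the first
row and column, gives `det C = ∏_{i ≠ j} (u i - u j) / (1 + u i - u j)` because the diagonal
entries of `C` are `1`, and each factor equals `(ξ i - ξ j) / (ξ i * ξ j + 1 - 2 * ξ j)`.
-/

open Finset Matrix

section PairProducts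

variable {ι M : Type*} [Fintype ι] [CommMonoid M]

theorem prod_filter_ne_eq_prod_Ioi_mul [LinearOrder ι] [LocallyFiniteOrderTop ι]
    (f : ι → ι → M) :
    ∏ p ∈ univ.filter (fun p : ι × ι => p.1 ≠ p.2), f p.1 p.2 =
      ∏ i, ∏ j ∈ Ioi i, f i j * f j i := by
  have hsplit : univ.filter (fun p : ι × ι => p.1 ≠ p.2) =
      univ.filter (fun p : ι × ι => p.1 < p.2) ∪ univ.filter (fun p : ι × ι => p.2 < p.1) := by
    ext p
    simp only [mem_filter, mem_union, mem_univ, true_and]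
    exact ne_iff_lt_or_gt
  have hdisj : Disjoint (univ.filter fun p : ι × ι => p.1 < p.2)
      (univ.filter fun p : ι × ι => p.2 < p.1) :=
    disjoint_filter.2 fun _ _ h₁ h₂ => lt_asymm h₁ h₂
  have hswap : ∏ p ∈ univ.filter (fun p : ι × ι => p.2 < p.1), f p.1 p.2 =
      ∏ p ∈ univ.filter (fun p : ι × ι => p.1 < p.2), f p.2 p.1 :=
    prod_nbij' Prod.swap Prod.swap (by simp) (by simp) (by simp) (by simp) (by simp)
  rw [hsplit, prod_union hdisj, hswap, ← prod_mul_distrib, prod_filter, Fintype.prod_prod_type]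
  refine prod_congr rfl fun i _ => ?_
  rw [← prod_filter, filter_lt_eq_Ioi]

theorem prod_prod_eq_prod_diag_mul_prod_filter_ne [DecidableEq ι] (f : ι → ι → M) :
    ∏ i, ∏ j, f i j =
      (∏ i, f i i) * ∏ p ∈ univ.filter (fun p : ι × ι => p.1 ≠ p.2), f p.1 p.2 := by
  rw [← Fintype.prod_prod_type', ← prod_filter_mul_prod_filter_not univ fun p : ι × ι => p.1 = p.2]
  congr 1
  rw [prod_filter, Fintype.prod_prod_type]
  exact prod_congr rfl fun i _ => by simp

end PairProducts

section Cauchy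

variable {K : Type*} [Field K]

theorem det_cauchy_succ {n : ℕ} (a b : Fin (n + 1) → K) (h : ∀ i j, a i + b j ≠ 0) :
    det (of fun i j => (a i + b j)⁻¹) =
      (a 0 + b 0)⁻¹ * ((∏ i : Fin n, (a 0 - a i.succ) / (a i.succ + b 0)) *
        ((∏ j : Fin n, (b 0 - b j.succ) / (a 0 + b j.succ)) *
          det (of fun i j : Fin n => (a i.succ + b j.succ)⁻¹))) := by
  -- subtracting `(a 0 + b 0) / (a i + b 0)` times row `0` from row `i` clears column `0`
  have hrow : det (of fun i j => (a i + b j)⁻¹) = det (of fun i j =>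
      if i = 0 then (a 0 + b j)⁻¹ else
        (a 0 - a i) * (b 0 - b j) / ((a i + b 0) * (a 0 + b j) * (a i + b j))) := by
    refine det_eq_of_forall_row_eq_smul_add_const
      (fun i => if i = 0 then 0 else (a 0 + b 0) / (a i + b 0)) 0 (if_pos rfl) fun i j => ?_
    by_cases hi : i = 0
    · simp [hi]
    · have := h i j; have := h 0 j; have := h i 0
      simp only [of_apply, if_neg hi, ↓reduceIte]
      field_simp
      ring
  rw [hrow, det_succ_column_zero, Fin.sum_univ_succ]
  simp only [of_apply, Fin.succ_ne_zero, ↓reduceIte, sub_self, zero_mul, mul_zero, zero_div,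
    sum_const_zero, add_zero, Fin.val_zero, pow_zero, one_mul, Fin.succAbove_zero]
  rw [← det_mul_row (fun j : Fin n => (b 0 - b j.succ) / (a 0 + b j.succ)),
    ← det_mul_column (fun i : Fin n => (a 0 - a i.succ) / (a i.succ + b 0))]
  congr 2
  ext i j
  simp only [submatrix_apply, of_apply, Fin.succ_ne_zero, ↓reduceIte]
  have := h i.succ j.succ; have := h 0 j.succ; have := h i.succ 0
  field_simp

theorem det_cauchy {n : ℕ} (a b : Fin n → K) (h : ∀ i j, a i + b j ≠ 0) :
    det (of fun i j => (a i + b j)⁻¹) =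
      (∏ i, ∏ j ∈ Ioi i, (a j - a i) * (b j - b i)) / ∏ i, ∏ j, (a i + b j) := by
  induction n with
  | zero => simp
  | succ n ih =>
    rw [det_cauchy_succ a b h, ih _ _ fun i j => h _ _, Fin.prod_univ_succ, Fin.prod_Ioi_zero,
      Fin.prod_univ_succ, Fin.prod_univ_succ]
    simp only [Fin.prod_Ioi_succ, Fin.prod_univ_succ (fun j => a _ + b j), prod_mul_distrib,
      prod_div_distrib]
    have hcol : ∏ i : Fin n, (a i.succ + b 0) ≠ 0 := prod_ne_zero_iff.2 fun _ _ => h _ _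
    have hrow : ∏ j : Fin n, (a 0 + b j.succ) ≠ 0 := prod_ne_zero_iff.2 fun _ _ => h _ _
    have hminor : ∏ i : Fin n, ∏ j : Fin n, (a i.succ + b j.succ) ≠ 0 :=
      prod_ne_zero_iff.2 fun _ _ => prod_ne_zero_iff.2 fun _ _ => h _ _
    have hpivot := h 0 0
    have hsign : (∏ i : Fin n, (a 0 - a i.succ)) * ∏ i : Fin n, (b 0 - b i.succ) =
        (∏ i : Fin n, (a i.succ - a 0)) * ∏ i : Fin n, (b i.succ - b 0) := by
      simp only [← prod_mul_distrib]
      exact prod_congr rfl fun _ _ => by ring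
    field_simp
    rw [hsign]
    ring

theorem det_inv_one_add_sub {n : ℕ} (b : Fin n → K) (h : ∀ i j, 1 + b i - b j ≠ 0) :
    det (of fun i j => (1 + b i - b j)⁻¹) =
      ∏ p ∈ univ.filter (fun p : Fin n × Fin n => p.1 ≠ p.2),
        (b p.1 - b p.2) / (1 + b p.1 - b p.2) := by
  have hcauchy := det_cauchy (fun i => 1 + b i) (fun j => -b j) fun i j => by
    simpa only [sub_eq_add_neg] using h i j
  simp only [← sub_eq_add_neg] at hcauchy
  rw [hcauchy, prod_div_distrib, prod_prod_eq_prod_diag_mul_prod_filter_ne,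
    prod_filter_ne_eq_prod_Ioi_mul fun i j => b i - b j]
  simp only [add_sub_cancel_right, prod_const_one, one_mul]
  congr 1
  exact prod_congr rfl fun i _ => prod_congr rfl fun j _ => by ring

theorem sub_eq_mul_mul_inv_one_sub_sub_inv_one_sub {x y : K} (hx : 1 - x ≠ 0) (hy : 1 - y ≠ 0) :
    x - y = (1 - x) * (1 - y) * ((1 - x)⁻¹ - (1 - y)⁻¹) := by
  field_simp
  ring

theorem mul_add_one_sub_two_mul_eq {x y : K} (hx : 1 - x ≠ 0) (hy : 1 - y ≠ 0) :
    x * y + 1 - 2 * y = (1 - x) * (1 - y) * (1 + (1 - x)⁻¹ - (1 - y)⁻¹) := by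
  field_simp
  ring

end Cauchy

theorem cauchy_type_det_general {F : Type*} [Field F] (n : ℕ) (ξ : Fin n → F)
    (h : ∀ i j : Fin n, ξ i * ξ j + 1 - 2 * ξ i ≠ 0) :
    Matrix.det (Matrix.of fun i j : Fin n => (ξ i * ξ j + 1 - 2 * ξ i)⁻¹)
    = (∏ k : Fin n, ((1 - ξ k) ^ 2)⁻¹) *
        ∏ p ∈ Finset.univ.filter (fun p : Fin n × Fin n => p.1 ≠ p.2),
          (ξ p.1 - ξ p.2) / (ξ p.1 * ξ p.2 + 1 - 2 * ξ p.2) := by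
  set u : Fin n → F := fun k => (1 - ξ k)⁻¹
  have hξ : ∀ k, 1 - ξ k ≠ 0 := fun k hk =>
    h k k (by linear_combination (1 - ξ k) * hk)
  have hden : ∀ i j, ξ i * ξ j + 1 - 2 * ξ j = (1 - ξ i) * (1 - ξ j) * (1 + u i - u j) :=
    fun i j => mul_add_one_sub_two_mul_eq (hξ i) (hξ j)
  have hu : ∀ i j, 1 + u i - u j ≠ 0 := fun i j hij =>
    h j i (by rw [mul_comm, hden, hij, mul_zero])
  calc det (of fun i j => (ξ i * ξ j + 1 - 2 * ξ i)⁻¹)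
      = det (of fun i j => u i * (u j * (1 + u i - u j)⁻¹)) := by
        rw [← det_transpose]
        congr 1
        ext i j
        simp only [transpose_apply, of_apply]
        rw [mul_comm (ξ j), hden, mul_inv, mul_inv, mul_assoc]
    _ = (∏ k, u k) * ((∏ k, u k) * det (of fun i j => (1 + u i - u j)⁻¹)) :=
        (det_mul_column u _).trans (congrArg _ (det_mul_row u _))
    _ = (∏ k, u k ^ 2) * det (of fun i j => (1 + u i - u j)⁻¹) := by
        rw [← mul_assoc, ← prod_mul_distrib]
        simp only [sq]
    _ = _ := by
        rw [det_inv_one_add_sub u hu]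
        congr 1
        · simp only [u, inv_pow]
        · refine prod_congr rfl fun p _ => ?_
          rw [hden, sub_eq_mul_mul_inv_one_sub_sub_inv_one_sub (hξ p.1) (hξ p.2),
            mul_div_mul_left _ _ (mul_ne_zero (hξ p.1) (hξ p.2))]

/-- The Cauchy-type determinant identity (B.5):
`det(1/(ξ_i ξ_j + 1 − 2ξ_i)) = ∏_k (1 − ξ_k)^{-2} · ∏_{i ≠ j} (ξ_i − ξ_j)/(ξ_i ξ_j + 1 − 2ξ_j)`. -/
theorem cauchy_type_det {F : Type*} [Field F] (n : ℕ) (hn : 1 ≤ n) (ξ : Fin n → F)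
    (h : ∀ i j : Fin n, ξ i * ξ j + 1 - 2 * ξ i ≠ 0) :
    Matrix.det (Matrix.of fun i j : Fin n => (ξ i * ξ j + 1 - 2 * ξ i)⁻¹)
    = (∏ k : Fin n, ((1 - ξ k) ^ 2)⁻¹) *
        ∏ p ∈ Finset.univ.filter (fun p : Fin n × Fin n => p.1 ≠ p.2),
          (ξ p.1 - ξ p.2) / (ξ p.1 * ξ p.2 + 1 - 2 * ξ p.2) :=
  cauchy_type_det_general n ξ h
end

section
/- Let erfc(z) = (2/√π) ∫_z^∞ e^{−u²} du be the complementary error function and define Ξ(ξ) = ∫_ξ^∞ erfc(u) du. Then for every ξ ≥ 0: Ξ(ξ) = (1/√π) ∫_0^1 e^{−ξ²/u²} du. -/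
open Real MeasureTheory

/-- The complementary error function `erfc(z) = (2/√π) ∫_z^∞ e^{−u²} du`. -/
noncomputable def erfc (z : ℝ) : ℝ := (2 / Real.sqrt π) * ∫ u in Set.Ioi z, Real.exp (-u ^ 2)

/-- `Ξ(ξ) = ∫_ξ^∞ erfc(u) du`. -/
noncomputable def Xi (ξ : ℝ) : ℝ := ∫ u in Set.Ioi ξ, erfc u

/-!
Both sides equal `e^{-ξ²}/√π - ξ erfc ξ`. On the left, `t erfc t - e^{-t²}/√π` is an
antiderivative of `erfc` that vanishes at infinity, because `t erfc t` is dominated by the tail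
`(2/√π) ∫_t^∞ u e^{-u²} du`. On the right, `u e^{-ξ²/u²} - √π ξ erfc (ξ/u)` is an antiderivative
of `e^{-ξ²/u²}` on `u > 0` that tends to `0` as `u → 0⁺`, since `ξ/u → ∞`.
-/

open Set Filter Topology

section IntegralIoi

variable {E : Type*} [NormedAddCommGroup E] [NormedSpace ℝ E] {f : ℝ → E} {a : ℝ}

theorem integral_Ioi_eq_sub_intervalIntegral (hf : IntegrableOn f (Ioi a)) {x : ℝ}
    (hx : a ≤ x) : ∫ u in Ioi x, f u = (∫ u in Ioi a, f u) - ∫ u in a..x, f u := by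
  rw [← intervalIntegral.integral_Ioi_sub_Ioi hf hx, sub_sub_cancel]

theorem hasDerivAt_integral_Ioi [CompleteSpace E] (hf : IntegrableOn f (Ioi a)) {t : ℝ}
    (ht : a < t) (hcont : ContinuousAt f t) :
    HasDerivAt (fun x => ∫ u in Ioi x, f u) (-f t) t := by
  have hprim := intervalIntegral.integral_hasDerivAt_right
    ((intervalIntegrable_iff_integrableOn_Ioc_of_le ht.le).2 (hf.mono_set Ioc_subset_Ioi_self))
    (AEStronglyMeasurable.stronglyMeasurableAtFilter_of_mem hf.aestronglyMeasurable
      (Ioi_mem_nhds ht)) hcont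
  refine (hprim.const_sub (∫ u in Ioi a, f u)).congr_of_eventuallyEq ?_
  filter_upwards [Ioi_mem_nhds ht] with x hx using
    integral_Ioi_eq_sub_intervalIntegral hf hx.le

theorem tendsto_integral_Ioi_atTop (hf : IntegrableOn f (Ioi a)) :
    Tendsto (fun x => ∫ u in Ioi x, f u) atTop (𝓝 0) := by
  have hprim := intervalIntegral_tendsto_integral_Ioi a hf tendsto_id
  rw [← sub_self (∫ u in Ioi a, f u)]
  refine (tendsto_const_nhds.sub hprim).congr' ?_
  filter_upwards [eventually_ge_atTop a] with x hx using
    (integral_Ioi_eq_sub_intervalIntegral hf hx).symm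

end IntegralIoi

theorem integrable_exp_neg_sq : Integrable fun u : ℝ => exp (-u ^ 2) := by
  simpa using integrable_exp_neg_mul_sq one_pos

theorem erfc_nonneg (t : ℝ) : 0 ≤ erfc t :=
  mul_nonneg (by positivity) (setIntegral_nonneg measurableSet_Ioi fun u _ => (exp_pos _).le)

theorem hasDerivAt_erfc (t : ℝ) : HasDerivAt erfc (-(2 / √π) * exp (-t ^ 2)) t :=
  ((hasDerivAt_integral_Ioi integrable_exp_neg_sq.integrableOn (sub_one_lt t)
    (by fun_prop)).const_mul (2 / √π)).congr_deriv (by ring)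

theorem tendsto_erfc_atTop : Tendsto erfc atTop (𝓝 0) := by
  have h := (tendsto_integral_Ioi_atTop integrable_exp_neg_sq.integrableOn
    (a := 0)).const_mul (2 / √π)
  rwa [mul_zero] at h

theorem integrable_mul_exp_neg_sq : Integrable fun u : ℝ => u * exp (-u ^ 2) := by
  simpa using integrable_mul_exp_neg_mul_sq one_pos

theorem mul_erfc_le (t : ℝ) :
    t * erfc t ≤ 2 / √π * ∫ u in Ioi t, u * exp (-u ^ 2) := by
  rw [erfc, mul_left_comm, ← integral_const_mul]
  gcongr ?_ * ?_
  refine setIntegral_mono_on (integrable_exp_neg_sq.const_mul t).integrableOn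
    integrable_mul_exp_neg_sq.integrableOn measurableSet_Ioi fun u hu => ?_
  gcongr
  exact hu.le

theorem tendsto_mul_erfc_atTop : Tendsto (fun t => t * erfc t) atTop (𝓝 0) := by
  have hmaj := (tendsto_integral_Ioi_atTop integrable_mul_exp_neg_sq.integrableOn
    (a := 0)).const_mul (2 / √π)
  rw [mul_zero] at hmaj
  refine squeeze_zero' ?_ ?_ hmaj
  · filter_upwards [eventually_ge_atTop 0] with t ht using mul_nonneg ht (erfc_nonneg t)
  · exact Eventually.of_forall mul_erfc_le

theorem hasDerivAt_mul_erfc_sub_exp (t : ℝ) :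
    HasDerivAt (fun t => t * erfc t - exp (-t ^ 2) / √π) (erfc t) t := by
  have hexp : HasDerivAt (fun t : ℝ => exp (-t ^ 2)) (exp (-t ^ 2) * -(2 * t)) t := by
    simpa using ((hasDerivAt_pow 2 t).neg).exp
  refine (((hasDerivAt_id t).mul (hasDerivAt_erfc t)).sub (hexp.div_const √π)).congr_deriv ?_
  simp only [id]
  ring

theorem tendsto_mul_erfc_sub_exp_atTop :
    Tendsto (fun t => t * erfc t - exp (-t ^ 2) / √π) atTop (𝓝 0) := by
  have hexp : Tendsto (fun t : ℝ => exp (-t ^ 2)) atTop (𝓝 0) :=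
    tendsto_exp_atBot.comp (tendsto_neg_atTop_atBot.comp (tendsto_pow_atTop two_ne_zero))
  simpa using tendsto_mul_erfc_atTop.sub (hexp.div_const √π)

theorem Xi_eq_exp_div_sub_mul_erfc (ξ : ℝ) : Xi ξ = exp (-ξ ^ 2) / √π - ξ * erfc ξ := by
  rw [Xi, integral_Ioi_of_hasDerivAt_of_nonneg' (fun t _ => hasDerivAt_mul_erfc_sub_exp t)
    (fun t _ => erfc_nonneg t) tendsto_mul_erfc_sub_exp_atTop]
  ring

section

variable {ξ : ℝ}

theorem hasDerivAt_mul_exp_sub_erfc_div {u : ℝ} (hu : 0 < u) :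
    HasDerivAt (fun u => u * exp (-ξ ^ 2 / u ^ 2) - √π * ξ * erfc (ξ / u))
      (exp (-ξ ^ 2 / u ^ 2)) u := by
  have hquot : HasDerivAt (fun u : ℝ => -ξ ^ 2 / u ^ 2) (2 * ξ ^ 2 / u ^ 3) u := by
    refine ((hasDerivAt_const u (-ξ ^ 2)).div (hasDerivAt_pow 2 u)
      (by positivity)).congr_deriv ?_
    field_simp
    ring
  have hdiv : HasDerivAt (fun u : ℝ => ξ / u) (-(ξ / u ^ 2)) u := by
    refine ((hasDerivAt_const u ξ).div (hasDerivAt_id u) hu.ne').congr_deriv ?_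
    simp only [id]
    ring
  refine (((hasDerivAt_id u).mul hquot.exp).sub
    (((hasDerivAt_erfc (ξ / u)).comp u hdiv).const_mul (√π * ξ))).congr_deriv ?_
  rw [div_pow, neg_div, id]
  field_simp
  ring

theorem exp_neg_sq_div_sq_le_one (u : ℝ) : exp (-ξ ^ 2 / u ^ 2) ≤ 1 :=
  exp_le_one_iff.2 (div_nonpos_of_nonpos_of_nonneg (neg_nonpos.2 (sq_nonneg ξ)) (sq_nonneg u))

theorem tendsto_mul_exp_sub_erfc_div_nhdsGT_zero (hξ : 0 ≤ ξ) :
    Tendsto (fun u => u * exp (-ξ ^ 2 / u ^ 2) - √π * ξ * erfc (ξ / u)) (𝓝[>] 0) (𝓝 0) := by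
  have hfirst : Tendsto (fun u => u * exp (-ξ ^ 2 / u ^ 2)) (𝓝[>] 0) (𝓝 0) := by
    refine squeeze_zero_norm (fun u => ?_) (tendsto_norm_zero.mono_left nhdsWithin_le_nhds)
    rw [norm_mul, Real.norm_of_nonneg (exp_pos _).le]
    exact mul_le_of_le_one_right (norm_nonneg u) (exp_neg_sq_div_sq_le_one u)
  have hsecond : Tendsto (fun u => √π * ξ * erfc (ξ / u)) (𝓝[>] 0) (𝓝 0) := by
    rcases hξ.eq_or_lt with rfl | hξ
    · simp
    have hdiv : Tendsto (fun u => ξ / u) (𝓝[>] 0) atTop :=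
      (tendsto_inv_nhdsGT_zero.const_mul_atTop hξ).congr fun u => (div_eq_mul_inv ξ u).symm
    simpa using (tendsto_erfc_atTop.comp hdiv).const_mul (√π * ξ)
  simpa using hfirst.sub hsecond

theorem intervalIntegrable_exp_neg_sq_div_sq (a b : ℝ) :
    IntervalIntegrable (fun u => exp (-ξ ^ 2 / u ^ 2)) volume a b := by
  refine (intervalIntegrable_const (c := (1 : ℝ))).mono_fun'
    (by fun_prop : Measurable _).aestronglyMeasurable (Eventually.of_forall fun u => ?_)
  simpa only [Real.norm_of_nonneg (exp_pos _).le] using exp_neg_sq_div_sq_le_one u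

theorem integral_exp_neg_sq_div_sq (hξ : 0 ≤ ξ) :
    ∫ u in (0 : ℝ)..1, exp (-ξ ^ 2 / u ^ 2) = exp (-ξ ^ 2) - √π * ξ * erfc ξ := by
  rw [intervalIntegral.integral_eq_sub_of_hasDerivAt_of_tendsto zero_lt_one
    (fun u hu => hasDerivAt_mul_exp_sub_erfc_div hu.1) (intervalIntegrable_exp_neg_sq_div_sq 0 1)
    (tendsto_mul_exp_sub_erfc_div_nhdsGT_zero hξ)
    ((hasDerivAt_mul_exp_sub_erfc_div one_pos).continuousAt.tendsto.mono_left
      nhdsWithin_le_nhds)]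
  simp

end

/-- The alternative integral representation (1.44): for `ξ ≥ 0`,
`Ξ(ξ) = (1/√π) ∫_0^1 e^{−ξ²/u²} du`. -/
theorem Xi_integral_representation (ξ : ℝ) (hξ : 0 ≤ ξ) :
    Xi ξ = (1 / Real.sqrt π) * ∫ u in (0:ℝ)..1, Real.exp (-ξ ^ 2 / u ^ 2) := by
  rw [Xi_eq_exp_div_sub_mul_erfc, integral_exp_neg_sq_div_sq hξ]
  field_simp
end
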